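/- arXiv:1407.7826 — 4 statements merged into one kernel-verified Lean document; each statement's English description precedes it below -/
import Mathlib

section
/- For any semistandard Young tableau T, the scanning tableau S(T) is a key: every entry appearing in column j of S(T) also appears in column j-1, for each j ≥ 2. -/
namespace Demazure

/-- A tableau given as its list of columns (left to right); each column lists its
entries from top to bottom. -/
abbrev Cols := List (List ℕ)

/-- The shape of a tableau: the list of its column lengths. -/
def shape (T : Cols) : List ℕ := T.map List.length

/-- Semistandard: column lengths weakly decreasing, entries strictly increasing
down each column, and entries weakly increasing along rows. -/
def IsSSYT (T : Cols) : Prop :=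
  (shape T).Chain' (fun a b => b ≤ a) ∧
  (∀ c ∈ T, c.Chain' (· < ·)) ∧
  T.Chain' (fun c c' => ∀ i, i < c'.length → c.getD i 0 ≤ c'.getD i 0)

/-- All entries lie in [n] = {1, ..., n}. -/
def EntriesIn (n : ℕ) (T : Cols) : Prop := ∀ c ∈ T, ∀ x ∈ c, 1 ≤ x ∧ x ≤ n

/-- A key: every entry of a column appears in the previous column. -/
def IsKeyCols (T : Cols) : Prop := T.Chain' (fun c c' => ∀ x ∈ c', x ∈ c)

/-- Entrywise comparison of two tableaux of the same shape. -/
def EntrywiseLE (T U : Cols) : Prop := List.Forall₂ (List.Forall₂ (· ≤ ·)) T U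

/-- Entry at column j, row i (1-indexed); 0 if out of range. -/
def entryAt (T : Cols) (j i : ℕ) : ℕ := (T.getD (j-1) []).getD (i-1) 0

/-- Continuation of the earliest weakly increasing subsequence after value `c`. -/
def ewisFrom (c : ℕ) : List ℕ → List ℕ
  | [] => []
  | x :: xs => if c ≤ x then x :: ewisFrom x xs else ewisFrom c xs

/-- The earliest weakly increasing subsequence (EWIS) of a sequence. -/
def ewis : List ℕ → List ℕ
  | [] => []
  | x :: xs => x :: ewisFrom x xs

/-- One scanning sweep: continue the EWIS of column bottoms with current value `c`,
returning the last value of the EWIS and the columns with the EWIS boxes removed. -/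
def scanAux (c : ℕ) : Cols → ℕ × Cols
  | [] => (c, [])
  | col :: rest =>
    match col.getLast? with
    | some b =>
      if c ≤ b then
        let r := scanAux b rest
        (r.1, col.dropLast :: r.2)
      else
        let r := scanAux c rest
        (r.1, col :: r.2)
    | none =>
      let r := scanAux c rest
      (r.1, col :: r.2)

/-- Produce the first column of the scanning tableau (top to bottom), with fuel. -/
def scanFirstFuel : ℕ → Cols → List ℕ
  | 0, _ => []
  | _, [] => []
  | fuel+1, col :: rest =>
    match col.getLast? with
    | none => []
    | some b =>
      let r := scanAux b rest
      scanFirstFuel fuel (col.dropLast :: r.2) ++ [r.1]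

/-- First column of the scanning tableau. -/
def scanFirst (T : Cols) : List ℕ :=
  scanFirstFuel (T.headD []).length T

/-- The scanning tableau S(T), column by column. -/
def scanTableau : Cols → Cols
  | [] => []
  | col :: rest => scanFirst (col :: rest) :: scanTableau rest

/-- Scanning-path version of `scanAux`: also records the boxes (column, row),
1-indexed, visited by the EWIS; `h` is the (1-indexed) number of the first column
of the remaining list. -/
def scanPathAux (c h : ℕ) : Cols → List (ℕ × ℕ) × Cols
  | [] => ([], [])
  | col :: rest =>
    match col.getLast? with
    | some b =>
      if c ≤ b then
        let r := scanPathAux b (h+1) rest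
        ((h, col.length) :: r.1, col.dropLast :: r.2)
      else
        let r := scanPathAux c (h+1) rest
        (r.1, col :: r.2)
    | none =>
      let r := scanPathAux c (h+1) rest
      (r.1, col :: r.2)

/-- The scanning paths originating in (1-indexed) column `j`, listed from the top
row of the column downwards. -/
def scanColPathsAux (j : ℕ) : ℕ → List ℕ → Cols → List (List (ℕ × ℕ))
  | 0, _, _ => []
  | fuel+1, col, rest =>
    match col.getLast? with
    | none => []
    | some b =>
      let r := scanPathAux b (j+1) rest
      scanColPathsAux j fuel col.dropLast r.2 ++ [(j, col.length) :: r.1]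

/-- The list of scanning paths P(T; j, ·) for the boxes of column j (1-indexed),
element i-1 being the path of the box in row i. -/
def pathsFrom (T : Cols) (j : ℕ) : List (List (ℕ × ℕ)) :=
  scanColPathsAux j (T.getD (j-1) []).length (T.getD (j-1) []) (T.drop j)

/-- The scanning path P(T; j, i) (1-indexed box). -/
def scanPath (T : Cols) (j i : ℕ) : List (ℕ × ℕ) :=
  (pathsFrom T j).getD (i-1) []

/-- The scanning-tableau entry S(T; j, i): the value at the last box of P(T;j,i). -/
def sVal (T : Cols) (j i : ℕ) : ℕ :=
  match (scanPath T j i).getLast? with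
  | some q => entryAt T q.1 q.2
  | none => 0

/-- The row index a(l,k;j): row of the path through (l-1, k); by convention k at j = l. -/
def aIdx (T : Cols) (l k j : ℕ) : ℕ :=
  if j = l then k
  else ((pathsFrom T j).findIdx (fun p => decide ((l-1, k) ∈ p))) + 1

/-- The row index b(l,k;j): row of the path through (l, k+1), with the stated
conventions at k = ζ_l and at j = l. -/
def bIdx (T : Cols) (l k j : ℕ) : ℕ :=
  if j = l then k + 1
  else if k = (T.getD (l-1) []).length then (T.getD (j-1) []).length + 1
  else ((pathsFrom T j).findIdx (fun p => decide ((l, k+1) ∈ p))) + 1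

/-- E(l,k;j,i): the last value of the EWIS defining P(T;j,i) occurring strictly to
the left of column l; by convention k when j = l. -/
def eVal (T : Cols) (l k j i : ℕ) : ℕ :=
  if j = l then k
  else
    match ((scanPath T j i).filter (fun q => decide (q.1 < l))).getLast? with
    | some q => entryAt T q.1 q.2
    | none => 0

/-- The local condition set B(T, Y; l, k) =
⋂_{j=1}^{l} ⋃_{i=a(j)}^{b(j)-1} [E(l,k;j,i), Y(j,i)]. -/
def localB (T Y : Cols) (l k : ℕ) : Set ℕ :=
  {v | ∀ j, 1 ≤ j → j ≤ l →
    ∃ i, aIdx T l k j ≤ i ∧ i + 1 ≤ bIdx T l k j ∧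
      eVal T l k j i ≤ v ∧ v ≤ entryAt Y j i}

/-- A skew tableau, as a list of columns, each with its offset (number of absent
boxes above it) and its list of entries (top to bottom). -/
abbrev SkewCols := List (ℕ × List ℕ)

/-- Entry of an offset column in absolute row r (0-indexed). -/
def colEntry? (p : ℕ × List ℕ) (r : ℕ) : Option ℕ :=
  if p.1 ≤ r then p.2[r - p.1]? else none

/-- Validity of a skew tableau: columns strictly increase, the inner and outer
column lengths are weakly decreasing, and rows weakly increase. -/
def IsSkewTableau (U : SkewCols) : Prop :=
  (∀ p ∈ U, p.2.Chain' (· < ·)) ∧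
  (U.map Prod.fst).Chain' (fun a b => b ≤ a) ∧
  (U.map (fun p => p.1 + p.2.length)).Chain' (fun a b => b ≤ a) ∧
  U.Chain' (fun p q => ∀ r x y, colEntry? p r = some x → colEntry? q r = some y → x ≤ y)

/-- The entries of absolute row r of a skew tableau, left to right. -/
def skewRow (U : SkewCols) (r : ℕ) : List ℕ :=
  U.filterMap (fun p => colEntry? p r)

def maxRow (U : SkewCols) : ℕ := (U.map (fun p => p.1 + p.2.length)).foldr max 0

/-- The row reading word: rows from bottom to top, each read left to right. -/
def rowWord (U : SkewCols) : List ℕ :=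
  ((List.range (maxRow U)).reverse.map (skewRow U)).flatten

/-- Schensted row insertion of x into one row. -/
def rowInsert (x : ℕ) : List ℕ → List ℕ × Option ℕ
  | [] => ([x], none)
  | y :: ys =>
    if y ≤ x then
      let r := rowInsert x ys
      (y :: r.1, r.2)
    else (x :: ys, some y)

/-- Schensted insertion of an entry into a tableau given by its rows. -/
def insertEntry : List (List ℕ) → ℕ → List (List ℕ)
  | [], x => [[x]]
  | row :: rows, x =>
    match rowInsert x row with
    | (r, none) => r :: rows
    | (r, some y) => r :: insertEntry rows y

/-- Insertion tableau (in row form) of a word. -/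
def insertWord (w : List ℕ) : List (List ℕ) :=
  w.foldl insertEntry []

/-- Convert a tableau from row form to column form. -/
def colsOfRows (rows : List (List ℕ)) : Cols :=
  (List.range (rows.headD []).length).map
    (fun j => rows.filterMap (fun r => r[j]?))

/-- Rectification of a skew tableau (jeu de taquin; computed, equivalently, as the
insertion tableau of the row reading word), in column form. -/
def rectify (U : SkewCols) : Cols := colsOfRows (insertWord (rowWord U))

/-- Frank: the column lengths are a rearrangement of those of the rectification. -/
def IsFrank (U : SkewCols) : Prop :=
  (U.map (fun p => p.2.length)).Perm ((rectify U).map List.length)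

/-- K is the right key of T: K has the shape of T and, for each j, the j-th column
of K is the rightmost column of a frank skew tableau rectifying to T whose
rightmost column has the length of the j-th column of T. -/
def IsRightKeyOf (T K : Cols) : Prop :=
  shape K = shape T ∧
  ∀ j < T.length, ∃ U : SkewCols, IsSkewTableau U ∧ IsFrank U ∧
    rectify U = T ∧
    (U.getLastD (0, [])).2.length = (T.getD j []).length ∧
    (U.getLastD (0, [])).2 = K.getD j []

/-- The right key R(T) of a tableau T. -/
noncomputable def rightKey (T : Cols) : Cols :=
  Classical.epsilon (IsRightKeyOf T)

/-- The key of the permutation w of shape given by the column lengths `zeta`: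
its column of length k consists of w(1), ..., w(k) (values in [n]) sorted. -/
def keyOf (n : ℕ) (w : Equiv.Perm (Fin n)) (zeta : List ℕ) : Cols :=
  zeta.map (fun k =>
    List.insertionSort (· ≤ ·)
      ((List.range k).filterMap (fun i =>
        if h : i < n then some (((w ⟨i, h⟩ : Fin n) : ℕ) + 1) else none)))

/-- w is 312-avoiding. -/
def Is312Avoiding {n : ℕ} (w : Equiv.Perm (Fin n)) : Prop :=
  ¬ ∃ a b c : Fin n, a < b ∧ b < c ∧ w b < w c ∧ w c < w a

/-- The set of Demazure tableaux D_λ(w): semistandard tableaux of the given shape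
with entries in [n] whose right key is entrywise dominated by the key of w. -/
def DemazureSet (n : ℕ) (zeta : List ℕ) (w : Equiv.Perm (Fin n)) : Set Cols :=
  {T | IsSSYT T ∧ shape T = zeta ∧ EntriesIn n T ∧
       EntrywiseLE (rightKey T) (keyOf n w zeta)}

/-- Column lengths of the partial staircase λ = (d,...,d,d-1,...,2,1):
ζ = (n, n-1, ..., n+1-d). -/
def staircaseCols (n d : ℕ) : List ℕ := (List.range d).map (fun j => n - j)

/-- S ⊆ ℤ^N is a convex polytope: the set of integral solutions of Ax ≤ b. -/
def IsConvexPolytopeSet (N : ℕ) (S : Set (Fin N → ℤ)) : Prop :=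
  ∃ (m : ℕ) (A : Matrix (Fin m) (Fin N) ℝ) (bb : Fin m → ℝ),
    S = {x | ∀ r, A.mulVec (fun i => (x i : ℝ)) r ≤ bb r}

/-- The point of ℤ^N obtained by reading the entries of a tableau in a fixed order. -/
def toPoint (N : ℕ) (T : Cols) : Fin N → ℤ := fun i => (T.flatten.getD i 0 : ℤ)

/-!
The first column of `S(c :: R)` consists of the outputs of successive sweeps through `R`
seeded by the entries of `c`, bottom entry first (`runSeq`). Two consecutive sweeps with
seeds `w ≤ z` can be swapped, at the price of replacing `z` by another seed `z' ≥ w`, without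
changing the multiset of outputs or the leftover columns; hence an extra seed dominating a
weakly decreasing list of seeds only adds outputs.

Compare the sweeps seeded by `c₁` through `c₂ :: R` with those seeded by `c₂` through `R`, and
let `b₁`, `b₂` be the bottom entries. If `b₁ ≤ b₂`, the first sweep passes through `b₂` and then
coincides with the sweep from `b₂`. If `b₂ < b₁`, then `c₁` is longer than `c₂` (rows weakly
increase) and the sweep from `b₁` skips `c₂`, so it is an extra dominating seed. By induction
every output for `c₂` is an output for `c₁`: column 2 of `S(T)` lies in column 1, and `S` of
the tail of `T` is the tail of `S(T)`.
-/

def runSeq : List ℕ → Cols → List ℕ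
  | [], _ => []
  | w :: ws, R => (scanAux w R).1 :: runSeq ws (scanAux w R).2

lemma scanAux_cons_of_le {col : List ℕ} {b c : ℕ} (h : col.getLast? = some b) (hc : c ≤ b)
    (R : Cols) :
    scanAux c (col :: R) = ((scanAux b R).1, col.dropLast :: (scanAux b R).2) := by
  simp [scanAux, h, hc]

lemma scanAux_cons_of_getLast?_lt {col : List ℕ} {c : ℕ} (h : ∀ b ∈ col.getLast?, b < c)
    (R : Cols) :
    scanAux c (col :: R) = ((scanAux c R).1, col :: (scanAux c R).2) := by
  cases hl : col.getLast? with
  | none => simp [scanAux, hl]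
  | some b =>
    have : ¬ c ≤ b := not_le.mpr (h b hl)
    simp [scanAux, hl, this]

lemma lt_of_mem_dropLast {col : List ℕ} {b x : ℕ} (hcol : col.IsChain (· < ·))
    (h : col.getLast? = some b) (hx : x ∈ col.dropLast) : x < b := by
  obtain ⟨l, rfl⟩ := List.getLast?_eq_some_iff.mp h
  rw [List.dropLast_concat] at hx
  exact (List.pairwise_append.mp (List.isChain_iff_pairwise.mp hcol)).2.2 x hx b (by simp)

lemma isChain_of_mem_scanAux {R : Cols} (hR : ∀ col ∈ R, col.IsChain (· < ·)) (c : ℕ) :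
    ∀ col ∈ (scanAux c R).2, col.IsChain (· < ·) := by
  induction R generalizing c with
  | nil => simp [scanAux]
  | cons col R ih =>
    simp only [List.mem_cons, forall_eq_or_imp] at hR
    cases hl : col.getLast? with
    | none =>
      rw [scanAux_cons_of_getLast?_lt (col := col) (by simp [hl])]
      simpa using ⟨hR.1, ih hR.2 c⟩
    | some b =>
      by_cases hc : c ≤ b
      · rw [scanAux_cons_of_le hl hc]
        simpa using ⟨hR.1.prefix (List.dropLast_prefix col), ih hR.2 b⟩
      · rw [scanAux_cons_of_getLast?_lt (col := col) (by simpa [hl] using hc)]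
        simpa using ⟨hR.1, ih hR.2 c⟩

lemma exists_scanAux_swap {R : Cols} (hR : ∀ col ∈ R, col.IsChain (· < ·)) {z w : ℕ}
    (hwz : w ≤ z) :
    ∃ z', w ≤ z' ∧ (scanAux z' (scanAux w R).2).2 = (scanAux w (scanAux z R).2).2 ∧
      [(scanAux w R).1, (scanAux z' (scanAux w R).2).1].Perm
        [(scanAux z R).1, (scanAux w (scanAux z R).2).1] := by
  induction R generalizing z w with
  | nil => exact ⟨z, hwz, rfl, .swap z w []⟩
  | cons col R ih =>
    simp only [List.mem_cons, forall_eq_or_imp] at hR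
    cases hl : col.getLast? with
    | none =>
      obtain ⟨z', hwz', hst, hperm⟩ := ih hR.2 hwz
      have skip (c : ℕ) (S : Cols) := scanAux_cons_of_getLast?_lt (col := col) (c := c)
        (by simp [hl]) S
      refine ⟨z', hwz', ?_⟩
      simp only [skip, hst]
      exact ⟨trivial, hperm⟩
    | some b =>
      have skip {c : ℕ} (hc : b < c) (S : Cols) :=
        scanAux_cons_of_getLast?_lt (col := col) (c := c) (by simpa [hl]) S
      rcases le_or_gt z b with hzb | hbz
      · refine ⟨w, le_rfl, ?_⟩
        simp [scanAux_cons_of_le hl hzb, scanAux_cons_of_le hl (hwz.trans hzb)]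
      rcases le_or_gt w b with hwb | hbw
      · -- `w` takes the bottom `b` of this column, which `z` skips; afterwards `b` plays `w`
        obtain ⟨z', hbz', hst, hperm⟩ := ih hR.2 hbz.le
        refine ⟨z', hwb.trans hbz', ?_⟩
        have skip' (S : Cols) := scanAux_cons_of_getLast?_lt (col := col.dropLast) (c := z')
          (fun b' hb' => (lt_of_mem_dropLast hR.1 hl (List.mem_of_getLast? hb')).trans_le hbz') S
        simp only [scanAux_cons_of_le hl hwb, skip hbz, skip', hst]
        exact ⟨trivial, hperm⟩
      · obtain ⟨z', hwz', hst, hperm⟩ := ih hR.2 hwz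
        refine ⟨z', hwz', ?_⟩
        simp only [skip hbz, skip hbw, skip (hbw.trans_le hwz'), hst]
        exact ⟨trivial, hperm⟩

lemma exists_runSeq_swap {R : Cols} (hR : ∀ col ∈ R, col.IsChain (· < ·)) {z w : ℕ}
    (hwz : w ≤ z) :
    ∃ z', w ≤ z' ∧ ∀ ws, (runSeq (w :: z' :: ws) R).Perm (runSeq (z :: w :: ws) R) := by
  obtain ⟨z', hwz', hst, hperm⟩ := exists_scanAux_swap hR hwz
  exact ⟨z', hwz', fun ws => by
    simp only [runSeq, hst]
    exact hperm.append_right _⟩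

lemma runSeq_subperm_cons {R : Cols} (hR : ∀ col ∈ R, col.IsChain (· < ·)) {z : ℕ}
    {ws : List ℕ} (hws : (z :: ws).Pairwise (· ≥ ·)) :
    (runSeq ws R).Subperm (runSeq (z :: ws) R) := by
  induction ws generalizing z R with
  | nil => simp [runSeq]
  | cons w ws ih =>
    simp only [List.pairwise_cons, List.mem_cons, forall_eq_or_imp] at hws
    obtain ⟨⟨hwz, -⟩, hww, hws⟩ := hws
    obtain ⟨z', hwz', hswap⟩ := exists_runSeq_swap hR hwz
    have hws' : (z' :: ws).Pairwise (· ≥ ·) :=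
      List.pairwise_cons.2 ⟨fun x hx => hwz'.trans' (hww x hx), hws⟩
    exact ((List.subperm_cons _).2 (ih (isChain_of_mem_scanAux hR w) hws')).trans
      (hswap ws).subperm

lemma runSeq_reverse_subperm {c₁ c₂ : List ℕ} {R : Cols} (hc₂ : c₂.IsChain (· < ·))
    (hR : ∀ col ∈ R, col.IsChain (· < ·)) (hlen : c₂.length ≤ c₁.length)
    (hrow : ∀ i, i < c₂.length → c₁.getD i 0 ≤ c₂.getD i 0) :
    (runSeq c₂.reverse R).Subperm (runSeq c₁.reverse (c₂ :: R)) := by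
  induction c₁ using List.reverseRecOn generalizing c₂ R with
  | nil =>
    obtain rfl : c₂ = [] := List.eq_nil_of_length_eq_zero (by simpa using hlen)
    simp [runSeq]
  | append_singleton i₁ b₁ ih =>
    rcases c₂.eq_nil_or_concat' with rfl | ⟨i₂, b₂, rfl⟩
    · simp [runSeq]
    have hrow_init {c : List ℕ} (hc : c.length ≤ i₁.length)
        (hcrow : ∀ i, i < c.length → (i₁ ++ [b₁]).getD i 0 ≤ c.getD i 0) :
        ∀ i, i < c.length → i₁.getD i 0 ≤ c.getD i 0 := fun i hi => by
      rw [← List.getD_append _ [b₁] _ _ (hi.trans_le hc)]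
      exact hcrow i hi
    rcases le_or_gt b₁ b₂ with hb | hb
    · have hlen' : i₂.length ≤ i₁.length := by simpa using hlen
      rw [List.reverse_concat, List.reverse_concat, runSeq, runSeq,
        scanAux_cons_of_le List.getLast?_concat hb, List.dropLast_concat]
      refine (List.subperm_cons _).2 (ih hc₂.left_of_append (isChain_of_mem_scanAux hR b₂)
        hlen' (hrow_init hlen' fun i hi => ?_))
      rw [← List.getD_append _ [b₂] _ _ hi]
      exact hrow i (by simp; omega)
    · have hlen' : (i₂ ++ [b₂]).length ≤ i₁.length := by
        by_contra! h
        have hbottom := hrow i₂.length (by simp)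
        have hi : i₁.length = i₂.length := by simp at hlen h; omega
        simp [← hi] at hbottom
        omega
      have hseeds : (b₁ :: (i₂ ++ [b₂]).reverse).Pairwise (· ≥ ·) := by
        rw [← List.reverse_concat, List.pairwise_reverse]
        exact (List.isChain_iff_pairwise.mp
          (hc₂.append (.singleton b₁) (by simpa using hb))).imp le_of_lt
      have hskip := scanAux_cons_of_getLast?_lt (col := i₂ ++ [b₂]) (c := b₁)
        (by simpa using hb) R
      refine (runSeq_subperm_cons hR hseeds).trans ?_
      rw [List.reverse_concat (l := i₁), runSeq, runSeq, hskip]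
      exact (List.subperm_cons _).2
        (ih hc₂ (isChain_of_mem_scanAux hR b₁) hlen' (hrow_init hlen' hrow))

lemma scanFirst_cons (col : List ℕ) (R : Cols) :
    scanFirst (col :: R) = (runSeq col.reverse R).reverse := by
  induction col using List.reverseRecOn generalizing R with
  | nil => simp [scanFirst, scanFirstFuel, runSeq]
  | append_singleton col b ih =>
    have hfuel (S : Cols) : scanFirstFuel col.length (col :: S) = scanFirst (col :: S) := rfl
    rw [scanFirst, List.headD_cons, List.length_append, List.length_singleton, scanFirstFuel,
      List.getLast?_concat, List.dropLast_concat]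
    simp [hfuel, ih, runSeq]

lemma IsSSYT.tail {c : List ℕ} {T : Cols} (h : IsSSYT (c :: T)) : IsSSYT T :=
  ⟨h.1.tail, fun col hcol => h.2.1 col (List.mem_cons_of_mem c hcol), h.2.2.tail⟩

lemma scanFirst_subset {c₁ c₂ : List ℕ} {R : Cols} (h : IsSSYT (c₁ :: c₂ :: R)) :
    scanFirst (c₂ :: R) ⊆ scanFirst (c₁ :: c₂ :: R) := by
  obtain ⟨hshape, hcols, hrows⟩ := h
  simp only [List.mem_cons, forall_eq_or_imp] at hcols
  intro x hx
  rw [scanFirst_cons, List.mem_reverse] at hx ⊢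
  exact (runSeq_reverse_subperm hcols.2.1 hcols.2.2 (List.isChain_cons_cons.mp hshape).1
    (List.isChain_cons_cons.mp hrows).1).subset hx

/-- The scanning tableau of a semistandard tableau is a key. -/
theorem scanTableau_isKey (T : Cols) (hT : IsSSYT T) :
    IsKeyCols (scanTableau T) := by
  induction T with
  | nil => exact List.IsChain.nil
  | cons c₁ T ih =>
    cases T with
    | nil => exact List.IsChain.singleton _
    | cons c₂ R => exact List.isChain_cons_cons.mpr ⟨scanFirst_subset hT, ih hT.tail⟩

end Demazure
end

section
/- For any semistandard Young tableau T, T is entrywise less than or equal to its scanning tableau S(T); that is, T(j,i) ≤ S(T;j,i) for every box (j,i) of the shape of T. -/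
namespace Demazure

/-!
Each entry of `scanTableau T` is the last value of a weakly increasing sequence of column
bottoms whose first value is the corresponding entry of `T`.
-/

lemma le_scanAux_fst (c : ℕ) (L : Cols) : c ≤ (scanAux c L).1 := by
  induction L generalizing c with
  | nil => exact le_rfl
  | cons col rest ih =>
    unfold scanAux
    split
    · split
      · next b _ hcb => exact hcb.trans (ih b)
      · exact ih c
    · exact ih c

lemma forall₂_le_scanFirstFuel (col : List ℕ) (rest : Cols) :
    List.Forall₂ (· ≤ ·) col (scanFirstFuel col.length (col :: rest)) := by
  induction col using List.reverseRecOn generalizing rest with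
  | nil => simp [scanFirstFuel]
  | append_singleton col b ih =>
    simp only [List.length_append, List.length_singleton, scanFirstFuel,
      List.getLast?_concat, List.dropLast_concat]
    exact List.rel_append (ih _) (.cons (le_scanAux_fst b _) .nil)

theorem le_scanTableau_general (T : Cols) :
    EntrywiseLE T (scanTableau T) := by
  induction T with
  | nil => exact .nil
  | cons col rest ih => exact .cons (forall₂_le_scanFirstFuel col rest) ih

/-- T is entrywise less than or equal to its scanning tableau S(T). -/
theorem le_scanTableau (T : Cols) (hT : IsSSYT T) :
    EntrywiseLE T (scanTableau T) :=
  le_scanTableau_general T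

end Demazure
end

section
/- Let λ be a partition, w a permutation, and T a semistandard tableau of shape λ. Then S(T;j,i) ≤ Y(w;j,i) for all boxes (j,i) of λ if and only if T(l,k) ∈ B(T,w;l,k) for all boxes (l,k) of λ. -/
namespace Demazure

/-!
Both sides are equivalent to `PathBounded T Y`: every box `(l, k)` on a scanning path
`P(T; j, i)` has `T(l, k) ≤ Y(j, i)`. Entries weakly increase along a scanning path, which ends in
the box giving `S(T; j, i)`; this is the equivalence with the left-hand side.

For the right-hand side, the paths starting in column `j` partition the boxes right of column `j`
and are nested: in each column, lower boxes lie on paths starting lower in column `j`. So the path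
through `(l, k)` starts in a row `i` with `a(j) ≤ i < b(j)`, and its entries before column `l` are
at most `T(l, k)`, i.e. `T(l, k) ∈ [E(l, k; j, i), Y(j, i)]`. Conversely, let `(l, k)` lie on
`P(T; j, i)` and `T(l, k) ∈ [E(l, k; j, i'), Y(j, i')]` with `a(j) ≤ i' < b(j)`. Then `i' ≤ i`:
a path starting in a row strictly between `i` and `b(j)` reaches column `l` carrying a value larger
than `T(l, k)`, since otherwise it would pass through column `l` below row `k` and so start no
higher than the path through `(l, k + 1)`, which starts in row `b(j)`. As the columns of a key
increase, `Y(j, i') ≤ Y(j, i)`.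

The facts about scanning paths are proved by induction along their construction: the path of the
lowest remaining box of column `j` takes the bottom boxes of the columns it visits, which are
then removed.
-/

open List

section ListLemmas

theorem getD_drop {α : Type*} (L : List (List α)) (j m : ℕ) :
    (L.drop j).getD m [] = L.getD (j + m) [] := by
  simp [getD_eq_getElem?_getD, getElem?_drop]

theorem getD_eq_getD_of_prefix {α : Type*} {A B : List α} (h : A <+: B) {t : ℕ}
    (ht : t < A.length) (d : α) : A.getD t d = B.getD t d := by
  rw [getD_eq_getElem _ _ ht, getD_eq_getElem _ _ (ht.trans_le h.length_le), h.getElem ht]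

theorem getLast?_eq_some_getD {α : Type*} {L : List α} {b : α} (h : L.getLast? = some b)
    (d : α) : b = L.getD (L.length - 1) d := by
  rw [getD_eq_getElem?_getD, ← getLast?_eq_getElem?, h]
  rfl

theorem forall_getD_of_forall {α : Type*} {P : List α → Prop} {L : List (List α)} (h0 : P [])
    (h : ∀ p ∈ L, P p) (t : ℕ) : P (L.getD t []) := by
  rcases Nat.lt_or_ge t L.length with ht | ht
  · rw [getD_eq_getElem _ _ ht]; exact h _ (getElem_mem ht)
  · rw [getD_eq_default _ _ ht]; exact h0

theorem antitone_cons_iff {α : Type*} {col : List α} {rest : List (List α)} :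
    (Antitone fun m => ((col :: rest).getD m []).length) ↔
      (rest.getD 0 []).length ≤ col.length ∧ Antitone fun m => (rest.getD m []).length := by
  refine ⟨fun H => ⟨by simpa using H (Nat.zero_le 1), fun a b hab => by
    simpa using H (Nat.succ_le_succ hab)⟩, fun ⟨h0, H⟩ => antitone_nat_of_succ_le fun m => ?_⟩
  cases m with
  | zero => simpa using h0
  | succ m => simpa using H (Nat.le_succ m)

theorem mem_getD_append_singleton {α : Type*} {Q : List (List α)} {p : List α} {i : ℕ} {q : α}
    (hi : 1 ≤ i) (hq : q ∈ (Q ++ [p]).getD (i - 1) []) :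
    (i ≤ Q.length ∧ q ∈ Q.getD (i - 1) []) ∨ (i = Q.length + 1 ∧ q ∈ p) := by
  rcases Nat.lt_or_ge (i - 1) Q.length with hlt | hge
  · rw [getD_append _ _ _ _ hlt] at hq
    exact Or.inl ⟨by omega, hq⟩
  · rw [getD_append_right _ _ _ _ hge] at hq
    obtain h0 | h0 : i - 1 - Q.length = 0 ∨ 1 ≤ i - 1 - Q.length := by omega
    · rw [h0] at hq
      exact Or.inr ⟨by omega, by simpa using hq⟩
    · rw [getD_eq_default _ _ (by simpa using h0)] at hq
      simp at hq

variable {α β γ : Type*} [Preorder α] [Preorder β]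

theorem getD_le_getD_of_pairwise {L : List α} (h : L.Pairwise (· ≤ ·)) {s t : ℕ} (hst : s ≤ t)
    (ht : t < L.length) (d : α) : L.getD s d ≤ L.getD t d := by
  rw [getD_eq_getElem _ _ (hst.trans_lt ht), getD_eq_getElem _ _ ht]
  exact h.rel_get_of_le (a := ⟨s, hst.trans_lt ht⟩) (b := ⟨t, ht⟩) hst

theorem getD_le_getD_of_isChain {L : List α} (h : L.IsChain (· < ·)) {s t : ℕ} (hst : s ≤ t)
    (ht : t < L.length) (d : α) : L.getD s d ≤ L.getD t d :=
  getD_le_getD_of_pairwise ((isChain_iff_pairwise.mp h).imp le_of_lt) hst ht d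

theorem getD_rel_getD_succ_of_isChain {R : γ → γ → Prop} {L : List γ}
    (h : L.IsChain R) {m : ℕ} (hm : m + 1 < L.length) (d : γ) :
    R (L.getD m d) (L.getD (m + 1) d) := by
  rw [getD_eq_getElem _ _ (by omega), getD_eq_getElem _ _ hm]
  exact isChain_iff_getElem.mp h m hm

theorem add_one_le_getD_of_isChain {L : List ℕ} (h : L.IsChain (· < ·)) (hpos : ∀ x ∈ L, 1 ≤ x) :
    ∀ {t}, t < L.length → t + 1 ≤ L.getD t 0
  | 0, ht => by rw [getD_eq_getElem _ _ ht]; exact hpos _ (getElem_mem ht)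
  | t + 1, ht => by
    have hprev := add_one_le_getD_of_isChain h hpos (t := t) (by omega)
    have hstep := isChain_iff_getElem.mp h t ht
    rw [getD_eq_getElem _ _ ht]
    rw [getD_eq_getElem _ _ (by omega)] at hprev
    omega

theorem le_of_mem_of_getLast? {f : γ → β} {p : List γ} (hc : (p.map f).IsChain (· ≤ ·))
    {a z : γ} (ha : a ∈ p) (hz : p.getLast? = some z) : f a ≤ f z := by
  obtain ⟨ys, rfl⟩ := getLast?_eq_some_iff.mp hz
  have hp := pairwise_map.mp (isChain_iff_pairwise.mp hc)
  rcases mem_append.mp ha with ha | ha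
  · exact (pairwise_append.mp hp).2.2 a ha z (mem_singleton_self z)
  · rw [mem_singleton.mp ha]

theorem le_of_mem_of_lt {g : γ → α} {f : γ → β} {p : List γ}
    (hg : (p.map g).Pairwise (· < ·)) (hc : (p.map f).IsChain (· ≤ ·))
    {a z : γ} (ha : a ∈ p) (hz : z ∈ p) (hlt : g a < g z) : f a ≤ f z := by
  obtain ⟨s, t, rfl⟩ := append_of_mem hz
  have hval := pairwise_map.mp (isChain_iff_pairwise.mp hc)
  rw [pairwise_map] at hg
  rcases mem_append.mp ha with ha | ha
  · exact (pairwise_append.mp hval).2.2 a ha z mem_cons_self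
  · rcases mem_cons.mp ha with rfl | ha
    · exact absurd hlt (lt_irrefl _)
    · exact absurd hlt (lt_asymm ((pairwise_cons.mp (pairwise_append.mp hg).2.1).1 a ha))

end ListLemmas

section Tableaux

variable {T : Cols}

theorem IsSSYT.isChain_getD (hT : IsSSYT T) (m : ℕ) : (T.getD m []).IsChain (· < ·) := by
  by_cases hm : m < T.length
  · exact hT.2.1 _ (by rw [getD_eq_getElem _ _ hm]; exact getElem_mem hm)
  · rw [getD_eq_default _ _ (by omega)]; exact isChain_nil

theorem IsSSYT.getD_le_getD_succ (hT : IsSSYT T) {m k : ℕ}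
    (hk : k < (T.getD (m + 1) []).length) :
    (T.getD m []).getD k 0 ≤ (T.getD (m + 1) []).getD k 0 := by
  by_cases hm : m + 1 < T.length
  · exact getD_rel_getD_succ_of_isChain hT.2.2 hm [] k hk
  · rw [getD_eq_default _ _ (by omega)] at hk; simp at hk

theorem shape_getD (T : Cols) (m : ℕ) : (shape T).getD m 0 = (T.getD m []).length := by
  simp only [shape, getD_eq_getElem?_getD, getElem?_map]
  cases T[m]? <;> rfl

theorem IsSSYT.length_antitone (hT : IsSSYT T) : Antitone (fun m => (T.getD m []).length) := by
  refine antitone_nat_of_succ_le fun m => ?_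
  by_cases hm : m + 1 < T.length
  · have := getD_rel_getD_succ_of_isChain hT.1 (by simpa [shape] using hm) 0
    rwa [shape_getD, shape_getD] at this
  · show (T.getD (m + 1) []).length ≤ _
    rw [getD_eq_default _ _ (by omega)]
    exact Nat.zero_le _

end Tableaux

def boxEntry (T : Cols) (q : ℕ × ℕ) : ℕ := entryAt T q.1 q.2

/-- What is left of the columns of `T` from (0-indexed) column `g` on, after boxes have been
removed from their bottoms. -/
def PrefixCols (T : Cols) (g : ℕ) (R : Cols) : Prop := ∀ m, R.getD m [] <+: T.getD (g + m) []

section ScanPathAux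

variable {T : Cols}

theorem PrefixCols.cons_iff {g : ℕ} {col : List ℕ} {rest : Cols} :
    PrefixCols T g (col :: rest) ↔ col <+: T.getD g [] ∧ PrefixCols T (g + 1) rest := by
  refine ⟨fun H => ⟨by simpa using H 0, fun m => ?_⟩, fun ⟨h0, H⟩ m => ?_⟩
  · simpa [Nat.add_assoc, Nat.add_comm 1 m] using H (m + 1)
  · cases m with
    | zero => simpa using h0
    | succ m => simpa [Nat.add_assoc, Nat.add_comm 1 m] using H m

theorem scanPathAux_cons_of_le {col : List ℕ} {c h b : ℕ} (rest : Cols)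
    (hL : col.getLast? = some b) (hcb : c ≤ b) :
    scanPathAux c h (col :: rest) =
      ((h, col.length) :: (scanPathAux b (h + 1) rest).1,
        col.dropLast :: (scanPathAux b (h + 1) rest).2) := by
  simp [scanPathAux, hL, hcb]

theorem scanPathAux_cons_of_forall_lt {col : List ℕ} {c h : ℕ} (rest : Cols)
    (hskip : ∀ b, col.getLast? = some b → b < c) :
    scanPathAux c h (col :: rest) =
      ((scanPathAux c (h + 1) rest).1, col :: (scanPathAux c (h + 1) rest).2) := by
  cases hL : col.getLast? with
  | none => simp [scanPathAux, hL]
  | some b => simp [scanPathAux, hL, not_le.mpr (hskip b hL)]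

theorem mem_scanPathAux : ∀ {R : Cols} {c h : ℕ} {q : ℕ × ℕ}, q ∈ (scanPathAux c h R).1 →
    ∃ m < R.length, q = (h + m, (R.getD m []).length) ∧ R.getD m [] ≠ []
  | [], _, _, _, hq => by simp [scanPathAux] at hq
  | col :: rest, c, h, q, hq => by
    have shift : ∀ {c'}, q ∈ (scanPathAux c' (h + 1) rest).1 →
        ∃ m < (col :: rest).length, q = (h + m, ((col :: rest).getD m []).length) ∧
          (col :: rest).getD m [] ≠ [] := fun hq' => by
      obtain ⟨m, hm, rfl, hne⟩ := mem_scanPathAux hq'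
      exact ⟨m + 1, by simpa using hm, by simp [Nat.add_assoc, Nat.add_comm 1 m],
        by simpa using hne⟩
    by_cases htake : ∃ b, col.getLast? = some b ∧ c ≤ b
    · obtain ⟨b, hL, hcb⟩ := htake
      rw [scanPathAux_cons_of_le rest hL hcb] at hq
      rcases mem_cons.mp hq with rfl | hq
      · exact ⟨0, by simp, by simp, by simpa using ne_nil_of_mem (mem_of_getLast? hL)⟩
      · exact shift hq
    · push Not at htake
      rw [scanPathAux_cons_of_forall_lt rest htake] at hq
      exact shift hq

theorem le_fst_of_mem_scanPathAux {R : Cols} {c h : ℕ} {q : ℕ × ℕ}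
    (hq : q ∈ (scanPathAux c h R).1) : h ≤ q.1 := by
  obtain ⟨m, -, rfl, -⟩ := mem_scanPathAux hq
  exact Nat.le_add_right h m

theorem pairwise_fst_scanPathAux : ∀ (R : Cols) (c h : ℕ),
    ((scanPathAux c h R).1.map Prod.fst).Pairwise (· < ·)
  | [], _, _ => by simp [scanPathAux]
  | col :: rest, c, h => by
    by_cases htake : ∃ b, col.getLast? = some b ∧ c ≤ b
    · obtain ⟨b, hL, hcb⟩ := htake
      rw [scanPathAux_cons_of_le rest hL hcb, map_cons, pairwise_cons]
      refine ⟨fun x hx => ?_, pairwise_fst_scanPathAux rest b (h + 1)⟩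
      obtain ⟨q, hq, rfl⟩ := mem_map.mp hx
      exact Nat.lt_of_succ_le (le_fst_of_mem_scanPathAux hq)
    · push Not at htake
      rw [scanPathAux_cons_of_forall_lt rest htake]
      exact pairwise_fst_scanPathAux rest c (h + 1)

theorem getD_scanPathAux_snd : ∀ (R : Cols) (c h m : ℕ),
    (scanPathAux c h R).2.getD m [] =
      if h + m ∈ (scanPathAux c h R).1.map Prod.fst then (R.getD m []).dropLast
      else R.getD m []
  | [], _, _, m => by simp [scanPathAux]
  | col :: rest, c, h, m => by
    have hshift : ∀ c' m', h + (m' + 1) ∈ (scanPathAux c' (h + 1) rest).1.map Prod.fst ↔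
        h + 1 + m' ∈ (scanPathAux c' (h + 1) rest).1.map Prod.fst := by
      intro c' m'; rw [Nat.add_assoc, Nat.add_comm 1 m']
    by_cases htake : ∃ b, col.getLast? = some b ∧ c ≤ b
    · obtain ⟨b, hL, hcb⟩ := htake
      rw [scanPathAux_cons_of_le rest hL hcb]
      cases m with
      | zero => simp
      | succ m =>
        have hne : h + (m + 1) ≠ h := by omega
        simp only [map_cons, mem_cons, hne, false_or, getD_cons_succ, hshift]
        exact getD_scanPathAux_snd rest b (h + 1) m
    · push Not at htake
      rw [scanPathAux_cons_of_forall_lt rest htake]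
      cases m with
      | zero =>
        have : h ∉ (scanPathAux c (h + 1) rest).1.map Prod.fst := fun hx => by
          obtain ⟨q, hq, rfl⟩ := mem_map.mp hx
          have := le_fst_of_mem_scanPathAux hq
          omega
        simp [this]
      | succ m =>
        simp only [getD_cons_succ, hshift]
        exact getD_scanPathAux_snd rest c (h + 1) m

theorem scanPathAux_snd_prefix (R : Cols) (c h m : ℕ) :
    (scanPathAux c h R).2.getD m [] <+: R.getD m [] := by
  rw [getD_scanPathAux_snd]
  split_ifs
  · exact dropLast_prefix _
  · exact prefix_refl _

theorem getD_scanPathAux_snd_of_mem {R : Cols} {c h m r : ℕ}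
    (hq : (h + m, r) ∈ (scanPathAux c h R).1) :
    r = (R.getD m []).length ∧ R.getD m [] ≠ [] ∧
      (scanPathAux c h R).2.getD m [] = (R.getD m []).dropLast := by
  obtain ⟨m', -, heq, hne⟩ := mem_scanPathAux hq
  obtain ⟨hm, rfl⟩ := Prod.mk.inj heq
  obtain rfl : m = m' := by omega
  refine ⟨rfl, hne, ?_⟩
  rw [getD_scanPathAux_snd, if_pos (mem_map.mpr ⟨_, hq, rfl⟩)]

theorem getD_scanPathAux_snd_of_not_mem {R : Cols} {c h m : ℕ}
    (hq : ∀ r, (h + m, r) ∉ (scanPathAux c h R).1) :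
    (scanPathAux c h R).2.getD m [] = R.getD m [] := by
  rw [getD_scanPathAux_snd, if_neg]
  intro hx
  obtain ⟨⟨a, r⟩, hmem, rfl⟩ := mem_map.mp hx
  exact hq r hmem

theorem filter_scanPathAux_fst_lt_eq_nil (R : Cols) {c h h' : ℕ} (hh : h' ≤ h) :
    (scanPathAux c h R).1.filter (fun q => q.1 < h') = [] := by
  rw [filter_eq_nil_iff]
  intro q hq
  have := le_fst_of_mem_scanPathAux hq
  simp only [decide_eq_true_eq, not_lt]
  omega

theorem boxEntry_of_getLast? {g b : ℕ} {col : List ℕ} (hpre : col <+: T.getD g [])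
    (hL : col.getLast? = some b) : boxEntry T (g + 1, col.length) = b := by
  have hlen : 0 < col.length := length_pos_iff.mpr (ne_nil_of_mem (mem_of_getLast? hL))
  rw [getLast?_eq_some_getD hL 0, getD_eq_getD_of_prefix hpre (by omega)]
  simp [boxEntry, entryAt]

theorem isChain_scanPathAux_entries : ∀ (R : Cols) (c g : ℕ), PrefixCols T g R →
    (c :: (scanPathAux c (g + 1) R).1.map (boxEntry T)).IsChain (· ≤ ·)
  | [], c, _, _ => by simp [scanPathAux]
  | col :: rest, c, g, hpre => by
    obtain ⟨hcol, hrest⟩ := PrefixCols.cons_iff.mp hpre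
    by_cases htake : ∃ b, col.getLast? = some b ∧ c ≤ b
    · obtain ⟨b, hL, hcb⟩ := htake
      rw [scanPathAux_cons_of_le rest hL hcb, map_cons, boxEntry_of_getLast? hcol hL]
      exact isChain_cons_cons.mpr ⟨hcb, isChain_scanPathAux_entries rest b (g + 1) hrest⟩
    · push Not at htake
      rw [scanPathAux_cons_of_forall_lt rest htake]
      exact isChain_scanPathAux_entries rest c (g + 1) hrest

theorem mem_scanPathAux_iff : ∀ (R : Cols) (c g m : ℕ), PrefixCols T g R → R.getD m [] ≠ [] →
    ((g + 1 + m, (R.getD m []).length) ∈ (scanPathAux c (g + 1) R).1 ↔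
      (((scanPathAux c (g + 1) R).1.filter (fun q => q.1 < g + 1 + m)).map (boxEntry T)).getLastD c
        ≤ boxEntry T (g + 1 + m, (R.getD m []).length))
  | [], _, _, m, _, hne => by simp at hne
  | col :: rest, c, g, 0, hpre, hne => by
    obtain ⟨b, hL⟩ : ∃ b, col.getLast? = some b :=
      ⟨_, getLast?_eq_some_getLast (by simpa using hne)⟩
    have hb := boxEntry_of_getLast? (PrefixCols.cons_iff.mp hpre).1 hL
    simp only [getD_cons_zero, Nat.add_zero] at hb ⊢
    by_cases hcb : c ≤ b
    · rw [scanPathAux_cons_of_le rest hL hcb]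
      dsimp only
      rw [filter_cons_of_neg (by simp), filter_scanPathAux_fst_lt_eq_nil rest (by omega), hb]
      simpa using hcb
    · rw [scanPathAux_cons_of_forall_lt rest (fun b' hb' => by
        rw [hL] at hb'; cases hb'; omega)]
      dsimp only
      rw [filter_scanPathAux_fst_lt_eq_nil rest (by omega), hb]
      simp only [map_nil, getLastD_nil, hcb, iff_false]
      intro hmem
      have := le_fst_of_mem_scanPathAux hmem
      omega
  | col :: rest, c, g, m + 1, hpre, hne => by
    have hrest := (PrefixCols.cons_iff.mp hpre).2
    have harith : g + 1 + (m + 1) = g + 1 + 1 + m := by omega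
    simp only [getD_cons_succ] at hne ⊢
    by_cases htake : ∃ b, col.getLast? = some b ∧ c ≤ b
    · obtain ⟨b, hL, hcb⟩ := htake
      rw [scanPathAux_cons_of_le rest hL hcb]
      dsimp only
      rw [filter_cons_of_pos (by simp), map_cons, getLastD_cons,
        boxEntry_of_getLast? (PrefixCols.cons_iff.mp hpre).1 hL, harith, mem_cons,
        or_iff_right fun h => by have := congrArg Prod.fst h; dsimp only at this; omega]
      exact mem_scanPathAux_iff rest b (g + 1) m hrest hne
    · push Not at htake
      rw [scanPathAux_cons_of_forall_lt rest htake, harith]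
      exact mem_scanPathAux_iff rest c (g + 1) m hrest hne

/-- If the next column is as long as `col`, its bottom entry is at least `b` (rows of `T` weakly
increase), so the sweep takes it. -/
theorem length_getD_zero_scanPathAux_snd_le (hT : IsSSYT T) {g b h : ℕ} {col : List ℕ}
    {rest : Cols} (hpre : PrefixCols T g (col :: rest)) (hL : col.getLast? = some b)
    (hd : (rest.getD 0 []).length ≤ col.length) :
    ((scanPathAux b h rest).2.getD 0 []).length ≤ col.length - 1 := by
  by_cases hshort : (rest.getD 0 []).length ≤ col.length - 1
  · exact (scanPathAux_snd_prefix rest b h 0).length_le.trans hshort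
  obtain ⟨hcol, hrest⟩ := PrefixCols.cons_iff.mp hpre
  have hlen : 0 < col.length := length_pos_iff.mpr (ne_nil_of_mem (mem_of_getLast? hL))
  obtain ⟨c₂, rest', rfl⟩ : ∃ c₂ rest', rest = c₂ :: rest' := by
    cases rest with
    | nil => simp at hshort
    | cons c₂ rest' => exact ⟨c₂, rest', rfl⟩
  simp only [getD_cons_zero] at hshort hd
  have hc₂ : c₂.length = col.length := by omega
  obtain ⟨b₂, hL₂⟩ : ∃ b₂, c₂.getLast? = some b₂ :=
    ⟨_, getLast?_eq_some_getLast (by rintro rfl; rw [length_nil] at hc₂; omega)⟩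
  have hc₂pre : c₂ <+: T.getD (g + 1) [] := by simpa using hrest 0
  have hbb : b ≤ b₂ := by
    rw [getLast?_eq_some_getD hL 0, getLast?_eq_some_getD hL₂ 0, hc₂,
      getD_eq_getD_of_prefix hcol (by omega), getD_eq_getD_of_prefix hc₂pre (by omega)]
    exact hT.getD_le_getD_succ (by have := hc₂pre.length_le; omega)
  rw [scanPathAux_cons_of_le rest' hL₂ hbb]
  simp [hc₂]

theorem antitone_scanPathAux_snd (hT : IsSSYT T) : ∀ (R : Cols) (c g : ℕ), PrefixCols T g R →
    (Antitone fun m => (R.getD m []).length) →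
      Antitone fun m => ((scanPathAux c (g + 1) R).2.getD m []).length
  | [], _, _, _, _ => by simp [scanPathAux, antitone_const]
  | col :: rest, c, g, hpre, hanti => by
    obtain ⟨hd, hanti'⟩ := antitone_cons_iff.mp hanti
    have hrest := (PrefixCols.cons_iff.mp hpre).2
    by_cases htake : ∃ b, col.getLast? = some b ∧ c ≤ b
    · obtain ⟨b, hL, hcb⟩ := htake
      rw [scanPathAux_cons_of_le rest hL hcb, antitone_cons_iff, length_dropLast]
      exact ⟨length_getD_zero_scanPathAux_snd_le hT hpre hL hd,
        antitone_scanPathAux_snd hT rest b (g + 1) hrest hanti'⟩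
    · push Not at htake
      rw [scanPathAux_cons_of_forall_lt rest htake, antitone_cons_iff]
      exact ⟨(scanPathAux_snd_prefix rest c _ 0).length_le.trans hd,
        antitone_scanPathAux_snd hT rest c (g + 1) hrest hanti'⟩

end ScanPathAux

section ScanPaths

variable {T : Cols} {j : ℕ}

theorem scanColPathsAux_succ {f : ℕ} {col : List ℕ} {b : ℕ} (rest : Cols)
    (hL : col.getLast? = some b) :
    scanColPathsAux j (f + 1) col rest =
      scanColPathsAux j f col.dropLast (scanPathAux b (j + 1) rest).2 ++
        [(j, col.length) :: (scanPathAux b (j + 1) rest).1] := by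
  simp [scanColPathsAux, hL]

/-- Invariant of the recursion `scanColPathsAux j f col rest`: `col` is what is left of column
`j` (1-indexed) and `rest` what is left of the columns to its right. -/
structure ScanState (T : Cols) (j f : ℕ) (col : List ℕ) (rest : Cols) : Prop where
  one_le : 1 ≤ j
  prefixCols : PrefixCols T (j - 1) (col :: rest)
  antitone : Antitone fun m => ((col :: rest).getD m []).length
  length_col : col.length = f

theorem getD_cons_drop (hj : 1 ≤ j) (m : ℕ) :
    (T.getD (j - 1) [] :: T.drop j).getD m [] = T.getD (j - 1 + m) [] := by
  cases m with
  | zero => simp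
  | succ m => rw [getD_cons_succ, getD_drop, show j - 1 + (m + 1) = j + m by omega]

namespace ScanState

variable {f : ℕ} {col : List ℕ} {rest : Cols}

theorem col_prefix (hs : ScanState T j f col rest) : col <+: T.getD (j - 1) [] :=
  (PrefixCols.cons_iff.mp hs.prefixCols).1

theorem rest_prefix (hs : ScanState T j f col rest) : PrefixCols T j rest := by
  have := (PrefixCols.cons_iff.mp hs.prefixCols).2
  rwa [Nat.sub_add_cancel hs.one_le] at this

theorem init (hT : IsSSYT T) (hj : 1 ≤ j) :
    ScanState T j (T.getD (j - 1) []).length (T.getD (j - 1) []) (T.drop j) where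
  one_le := hj
  prefixCols m := by rw [getD_cons_drop hj]
  antitone a b hab := by
    simp only [getD_cons_drop hj]
    exact hT.length_antitone (by omega)
  length_col := rfl

theorem step (hT : IsSSYT T) (hs : ScanState T j (f + 1) col rest) {b : ℕ}
    (hL : col.getLast? = some b) :
    ScanState T j f col.dropLast (scanPathAux b (j + 1) rest).2 where
  one_le := hs.one_le
  prefixCols := PrefixCols.cons_iff.mpr ⟨(dropLast_prefix col).trans hs.col_prefix, by
    rw [Nat.sub_add_cancel hs.one_le]
    exact fun m => (scanPathAux_snd_prefix rest b _ m).trans (hs.rest_prefix m)⟩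
  antitone := by
    obtain ⟨hd, hanti⟩ := antitone_cons_iff.mp hs.antitone
    refine antitone_cons_iff.mpr ⟨?_, antitone_scanPathAux_snd hT rest b j hs.rest_prefix hanti⟩
    rw [length_dropLast]
    exact length_getD_zero_scanPathAux_snd_le hT hs.prefixCols hL hd
  length_col := by rw [length_dropLast, hs.length_col]; rfl

theorem induction (hT : IsSSYT T)
    {P : ℕ → List ℕ → Cols → List (List (ℕ × ℕ)) → Prop}
    (zero : ∀ rest, ScanState T j 0 [] rest → P 0 [] rest [])
    (succ : ∀ f col rest b, ScanState T j (f + 1) col rest → col.getLast? = some b →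
      P f col.dropLast (scanPathAux b (j + 1) rest).2
        (scanColPathsAux j f col.dropLast (scanPathAux b (j + 1) rest).2) →
      P (f + 1) col rest (scanColPathsAux j f col.dropLast (scanPathAux b (j + 1) rest).2 ++
        [(j, col.length) :: (scanPathAux b (j + 1) rest).1])) :
    ∀ {f col rest}, ScanState T j f col rest → P f col rest (scanColPathsAux j f col rest)
  | 0, col, rest, hs => by
    obtain rfl : col = [] := length_eq_zero_iff.mp hs.length_col
    exact zero rest hs
  | f + 1, col, rest, hs => by
    obtain ⟨b, hL⟩ : ∃ b, col.getLast? = some b :=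
      ⟨_, getLast?_eq_some_getLast (ne_nil_of_length_eq_add_one hs.length_col)⟩
    rw [scanColPathsAux_succ rest hL]
    exact succ f col rest b hs hL (ScanState.induction hT zero succ (hs.step hT hL))

theorem length_scanColPathsAux (hT : IsSSYT T) (hs : ScanState T j f col rest) :
    (scanColPathsAux j f col rest).length = f := by
  refine ScanState.induction hT (P := fun f _ _ Out => Out.length = f) (fun _ _ => rfl) ?_ hs
  intro f col rest b _ _ ih
  simp [ih]

theorem head_scanColPathsAux (hT : IsSSYT T) (hs : ScanState T j f col rest) :
    ∀ i, 1 ≤ i → i ≤ f → ∃ p, (scanColPathsAux j f col rest).getD (i - 1) [] = (j, i) :: p ∧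
      ∀ q ∈ p, j < q.1 := by
  refine ScanState.induction hT (P := fun f _ _ Out => ∀ i, 1 ≤ i → i ≤ f →
    ∃ p, Out.getD (i - 1) [] = (j, i) :: p ∧ ∀ q ∈ p, j < q.1) (fun _ _ i h1 h0 => by omega) ?_ hs
  intro f col rest b hs hL ih i h1 hi
  have hQ := (hs.step hT hL).length_scanColPathsAux hT
  rcases Nat.lt_or_ge (i - 1) f with hlt | hge
  · rw [getD_append _ _ _ _ (by omega)]
    exact ih i h1 (by omega)
  · obtain rfl : i = f + 1 := by omega
    rw [getD_append_right _ _ _ _ (by omega), hQ, Nat.add_sub_cancel, Nat.sub_self, getD_cons_zero,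
      hs.length_col]
    exact ⟨_, rfl, fun q hq => le_fst_of_mem_scanPathAux hq⟩

theorem mem_bounds_scanColPathsAux (hT : IsSSYT T) (hs : ScanState T j f col rest) :
    ∀ i l k, 1 ≤ i → (l, k) ∈ (scanColPathsAux j f col rest).getD (i - 1) [] →
      j ≤ l ∧ 1 ≤ k ∧ k ≤ ((col :: rest).getD (l - j) []).length ∧ (l = j → k = i) := by
  refine ScanState.induction hT (P := fun f col rest Out => ∀ i l k, 1 ≤ i →
    (l, k) ∈ Out.getD (i - 1) [] →
      j ≤ l ∧ 1 ≤ k ∧ k ≤ ((col :: rest).getD (l - j) []).length ∧ (l = j → k = i))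
    (fun _ _ i l k _ hq => by simp at hq) ?_ hs
  intro f col rest b hs hL ih i l k h1 hq
  rcases mem_getD_append_singleton h1 hq with ⟨-, hq⟩ | ⟨hi, hq⟩
  · obtain ⟨hjl, hk, hkS, hlj⟩ := ih i l k h1 hq
    refine ⟨hjl, hk, hkS.trans ?_, hlj⟩
    cases l - j with
    | zero => exact (dropLast_prefix col).length_le
    | succ m => exact (scanPathAux_snd_prefix rest b _ m).length_le
  · rw [(hs.step hT hL).length_scanColPathsAux hT] at hi
    rcases mem_cons.mp hq with heq | hq
    · obtain ⟨rfl, rfl⟩ := Prod.mk.inj heq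
      simp [hs.length_col, hi]
    · obtain ⟨m, -, heq, hne⟩ := mem_scanPathAux hq
      obtain ⟨rfl, rfl⟩ := Prod.mk.inj heq
      have hlen := length_pos_iff.mpr hne
      refine ⟨by omega, hlen, ?_, by omega⟩
      rw [show j + 1 + m - j = m + 1 by omega, getD_cons_succ]

theorem mem_new_path (hs : ScanState T j (f + 1) col rest) {b l k : ℕ}
    (hq : (l, k) ∈ (j, col.length) :: (scanPathAux b (j + 1) rest).1) :
    j ≤ l ∧ k = ((col :: rest).getD (l - j) []).length ∧
      ((col.dropLast :: (scanPathAux b (j + 1) rest).2).getD (l - j) []).length + 1 = k := by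
  rcases mem_cons.mp hq with heq | hq
  · obtain ⟨rfl, rfl⟩ := Prod.mk.inj heq
    simp [hs.length_col]
  · obtain ⟨m, -, heq, -⟩ := mem_scanPathAux hq
    obtain ⟨rfl, rfl⟩ := Prod.mk.inj heq
    obtain ⟨-, hne, hsnd⟩ := getD_scanPathAux_snd_of_mem hq
    have hlen := length_pos_iff.mpr hne
    rw [show j + 1 + m - j = m + 1 by omega, getD_cons_succ, getD_cons_succ, hsnd, length_dropLast]
    exact ⟨by omega, rfl, by omega⟩

theorem cover_scanColPathsAux (hT : IsSSYT T) (hs : ScanState T j f col rest) :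
    ∀ l k, j < l → 1 ≤ k → k ≤ ((col :: rest).getD (l - j) []).length →
      ∃ i, 1 ≤ i ∧ i ≤ f ∧ (l, k) ∈ (scanColPathsAux j f col rest).getD (i - 1) [] := by
  refine ScanState.induction hT (P := fun f col rest Out => ∀ l k, j < l → 1 ≤ k →
    k ≤ ((col :: rest).getD (l - j) []).length → ∃ i, 1 ≤ i ∧ i ≤ f ∧ (l, k) ∈ Out.getD (i - 1) [])
    (fun rest hs l k hl hk hkS => absurd (hkS.trans (hs.antitone (Nat.zero_le _)))
      (by simp only [getD_cons_zero, length_nil]; omega))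
    ?_ hs
  intro f col rest b hs hL ih l k hl hk hkS
  have hQ := (hs.step hT hL).length_scanColPathsAux hT
  obtain ⟨m, hm⟩ : ∃ m, l - j = m + 1 := ⟨l - j - 1, by omega⟩
  have hl' : l = j + 1 + m := by omega
  rw [hm, getD_cons_succ] at hkS
  by_cases hk' : k ≤ ((scanPathAux b (j + 1) rest).2.getD m []).length
  · obtain ⟨i, h1, hi, hmem⟩ := ih l k hl hk (by rwa [hm, getD_cons_succ])
    exact ⟨i, h1, by omega, by rwa [getD_append _ _ _ _ (by omega)]⟩
  · by_cases hvis : ∃ r, (j + 1 + m, r) ∈ (scanPathAux b (j + 1) rest).1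
    · obtain ⟨r, hr⟩ := hvis
      obtain ⟨rfl, hne, hsnd⟩ := getD_scanPathAux_snd_of_mem hr
      rw [hsnd, length_dropLast] at hk'
      refine ⟨f + 1, by omega, le_rfl, ?_⟩
      rw [getD_append_right _ _ _ _ (by omega), hQ, Nat.add_sub_cancel, Nat.sub_self,
        getD_cons_zero, hl', show k = (rest.getD m []).length by omega]
      exact mem_cons_of_mem _ hr
    · push Not at hvis
      rw [getD_scanPathAux_snd_of_not_mem hvis] at hk'
      exact absurd hkS hk'

theorem lt_of_mem_new_path (hT : IsSSYT T) (hs : ScanState T j (f + 1) col rest) {b i l k k' : ℕ}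
    (hL : col.getLast? = some b) (hi : 1 ≤ i)
    (hQ : (l, k') ∈
      (scanColPathsAux j f col.dropLast (scanPathAux b (j + 1) rest).2).getD (i - 1) [])
    (hp : (l, k) ∈ (j, col.length) :: (scanPathAux b (j + 1) rest).1) : k' < k := by
  have hk' := ((hs.step hT hL).mem_bounds_scanColPathsAux hT i l k' hi hQ).2.2.1
  have hk := (hs.mem_new_path hp).2.2
  omega

theorem disjoint_scanColPathsAux (hT : IsSSYT T) (hs : ScanState T j f col rest) :
    ∀ i i' q, 1 ≤ i → 1 ≤ i' → q ∈ (scanColPathsAux j f col rest).getD (i - 1) [] →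
      q ∈ (scanColPathsAux j f col rest).getD (i' - 1) [] → i = i' := by
  refine ScanState.induction hT (P := fun _ _ _ Out => ∀ i i' q, 1 ≤ i → 1 ≤ i' →
    q ∈ Out.getD (i - 1) [] → q ∈ Out.getD (i' - 1) [] → i = i')
    (fun _ _ i i' q _ _ hq => by simp at hq) ?_ hs
  intro f col rest b hs hL ih i i' ⟨l, k⟩ h1 h1' hq hq'
  rcases mem_getD_append_singleton h1 hq with ⟨-, hq⟩ | ⟨hi, hq⟩ <;>
    rcases mem_getD_append_singleton h1' hq' with ⟨-, hq'⟩ | ⟨hi', hq'⟩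
  · exact ih i i' _ h1 h1' hq hq'
  · exact absurd (lt_of_mem_new_path hT hs hL h1 hq hq') (lt_irrefl k)
  · exact absurd (lt_of_mem_new_path hT hs hL h1' hq' hq) (lt_irrefl k)
  · omega

theorem lt_of_mem_scanColPathsAux_of_lt (hT : IsSSYT T) (hs : ScanState T j f col rest) :
    ∀ i i' l k k', 1 ≤ i → 1 ≤ i' → (l, k) ∈ (scanColPathsAux j f col rest).getD (i - 1) [] →
      (l, k') ∈ (scanColPathsAux j f col rest).getD (i' - 1) [] → k < k' → i < i' := by
  refine ScanState.induction hT (P := fun _ _ _ Out => ∀ i i' l k k', 1 ≤ i → 1 ≤ i' →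
    (l, k) ∈ Out.getD (i - 1) [] → (l, k') ∈ Out.getD (i' - 1) [] → k < k' → i < i')
    (fun _ _ i i' l k k' _ _ hq => by simp at hq) ?_ hs
  intro f col rest b hs hL ih i i' l k k' h1 h1' hq hq' hkk
  rcases mem_getD_append_singleton h1 hq with ⟨hi, hq⟩ | ⟨hi, hq⟩ <;>
    rcases mem_getD_append_singleton h1' hq' with ⟨-, hq'⟩ | ⟨hi', hq'⟩
  · exact ih i i' l k k' h1 h1' hq hq' hkk
  · omega
  · exact absurd (lt_of_mem_new_path hT hs hL h1' hq' hq) (by omega)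
  · have := (hs.mem_new_path hq).2.1
    have := (hs.mem_new_path hq').2.1
    omega

theorem row_le_of_mem_scanColPathsAux (hT : IsSSYT T) (hs : ScanState T j f col rest) :
    ∀ i l k, 1 ≤ i → (l, k) ∈ (scanColPathsAux j f col rest).getD (i - 1) [] → k ≤ i := by
  refine ScanState.induction hT (P := fun _ _ _ Out => ∀ i l k, 1 ≤ i →
    (l, k) ∈ Out.getD (i - 1) [] → k ≤ i) (fun _ _ i l k _ hq => by simp at hq) ?_ hs
  intro f col rest b hs hL ih i l k h1 hq
  rcases mem_getD_append_singleton h1 hq with ⟨-, hq⟩ | ⟨hi, hq⟩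
  · exact ih i l k h1 hq
  · rw [(hs.step hT hL).length_scanColPathsAux hT] at hi
    have hk := (hs.mem_new_path hq).2.1
    have hcol := hs.antitone (Nat.zero_le (l - j))
    simp only [getD_cons_zero, hs.length_col] at hcol
    omega

theorem le_of_mem_scanColPathsAux_left (hT : IsSSYT T) (hs : ScanState T j f col rest) :
    ∀ i i' l k, 1 ≤ i → 1 ≤ i' → j + 1 < l →
      (l - 1, k) ∈ (scanColPathsAux j f col rest).getD (i - 1) [] →
      (l, k) ∈ (scanColPathsAux j f col rest).getD (i' - 1) [] → i ≤ i' := by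
  refine ScanState.induction hT (P := fun _ _ _ Out => ∀ i i' l k, 1 ≤ i → 1 ≤ i' → j + 1 < l →
    (l - 1, k) ∈ Out.getD (i - 1) [] → (l, k) ∈ Out.getD (i' - 1) [] → i ≤ i')
    (fun _ _ i i' l k _ _ _ hq => by simp at hq) ?_ hs
  intro f col rest b hs hL ih i i' l k h1 h1' hl hq hq'
  rcases mem_getD_append_singleton h1 hq with ⟨hi, hq⟩ | ⟨hi, hq⟩ <;>
    rcases mem_getD_append_singleton h1' hq' with ⟨-, hq'⟩ | ⟨hi', hq'⟩
  · exact ih i i' l k h1 h1' hl hq hq'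
  · omega
  · have hk := (hs.mem_new_path hq).2.2
    have hk' := ((hs.step hT hL).mem_bounds_scanColPathsAux hT i' l k h1' hq').2.2.1
    have hanti := (hs.step hT hL).antitone (show l - 1 - j ≤ l - j by omega)
    simp only at hanti
    omega
  · omega

theorem pairwise_fst_of_mem_scanColPathsAux (hT : IsSSYT T) (hs : ScanState T j f col rest) :
    ∀ p ∈ scanColPathsAux j f col rest, (p.map Prod.fst).Pairwise (· < ·) := by
  refine ScanState.induction hT (P := fun _ _ _ Out => ∀ p ∈ Out, (p.map Prod.fst).Pairwise (· < ·))
    (fun _ _ p hp => by simp at hp) ?_ hs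
  intro f col rest b hs hL ih p hp
  rcases mem_append.mp hp with hp | hp
  · exact ih p hp
  · rw [mem_singleton.mp hp, map_cons, pairwise_cons]
    refine ⟨fun x hx => ?_, pairwise_fst_scanPathAux rest b (j + 1)⟩
    obtain ⟨q, hq, rfl⟩ := mem_map.mp hx
    exact le_fst_of_mem_scanPathAux hq

theorem isChain_entries_of_mem_scanColPathsAux (hT : IsSSYT T) (hs : ScanState T j f col rest) :
    ∀ p ∈ scanColPathsAux j f col rest, (p.map (boxEntry T)).IsChain (· ≤ ·) := by
  refine ScanState.induction hT
    (P := fun _ _ _ Out => ∀ p ∈ Out, (p.map (boxEntry T)).IsChain (· ≤ ·))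
    (fun _ _ p hp => by simp at hp) ?_ hs
  intro f col rest b hs hL ih p hp
  rcases mem_append.mp hp with hp | hp
  · exact ih p hp
  · have hhead := boxEntry_of_getLast? hs.col_prefix hL
    rw [Nat.sub_add_cancel hs.one_le] at hhead
    rw [mem_singleton.mp hp, map_cons, hhead]
    exact isChain_scanPathAux_entries rest b j hs.rest_prefix

/-- `hk` says that `(l, k)` is not removed by the new path. -/
theorem entry_lt_or_mem_below_new_path (hT : IsSSYT T) (hs : ScanState T j (f + 1) col rest)
    {b l k : ℕ} (hL : col.getLast? = some b) (hl : j < l) (hk1 : 1 ≤ k)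
    (hk : k ≤ ((col.dropLast :: (scanPathAux b (j + 1) rest).2).getD (l - j) []).length) :
    boxEntry T (l, k) < ((((j, col.length) :: (scanPathAux b (j + 1) rest).1).filter
        (fun q => q.1 < l)).map (boxEntry T)).getLastD 0 ∨
      ∃ ρ, k < ρ ∧ (l, ρ) ∈ (j, col.length) :: (scanPathAux b (j + 1) rest).1 := by
  obtain ⟨m, hm⟩ : ∃ m, l - j = m + 1 := ⟨l - j - 1, by omega⟩
  have hl' : l = j + 1 + m := by omega
  rw [hm, getD_cons_succ] at hk
  have hkρ := hk.trans (scanPathAux_snd_prefix rest b (j + 1) m).length_le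
  have hne : rest.getD m [] ≠ [] := by rintro h; rw [h, length_nil] at hkρ; omega
  refine (Nat.lt_or_ge _ _).imp id fun hV => ?_
  have hhead := boxEntry_of_getLast? hs.col_prefix hL
  rw [Nat.sub_add_cancel hs.one_le] at hhead
  rw [filter_cons_of_pos (by simpa using hl), map_cons, getLastD_cons, hhead] at hV
  have hmono : boxEntry T (l, k) ≤ boxEntry T (l, (rest.getD m []).length) := by
    have hlen := (hs.rest_prefix m).length_le
    simp only [boxEntry, entryAt]
    rw [hl', show j + 1 + m - 1 = j + m by omega]
    exact getD_le_getD_of_isChain (hT.isChain_getD _) (by omega) (by omega) 0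
  have htake := (mem_scanPathAux_iff rest b j m hs.rest_prefix hne).mpr
    (by rw [← hl']; exact hV.trans hmono)
  rw [← hl'] at htake
  have hρ := (hs.mem_new_path (mem_cons_of_mem _ htake)).2.2
  rw [hm, getD_cons_succ] at hρ
  exact ⟨_, by omega, mem_cons_of_mem _ htake⟩

theorem entry_lt_or_mem_below (hT : IsSSYT T) (hs : ScanState T j f col rest) :
    ∀ i i' l k, 1 ≤ i → i < i' → i' ≤ f → j < l →
      (l, k) ∈ (scanColPathsAux j f col rest).getD (i - 1) [] →
      boxEntry T (l, k) < ((((scanColPathsAux j f col rest).getD (i' - 1) []).filter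
          (fun q => q.1 < l)).map (boxEntry T)).getLastD 0 ∨
        ∃ ρ, k < ρ ∧ (l, ρ) ∈ (scanColPathsAux j f col rest).getD (i' - 1) [] := by
  refine ScanState.induction hT (P := fun f _ _ Out => ∀ i i' l k, 1 ≤ i → i < i' → i' ≤ f →
    j < l → (l, k) ∈ Out.getD (i - 1) [] →
    boxEntry T (l, k) < (((Out.getD (i' - 1) []).filter (fun q => q.1 < l)).map
      (boxEntry T)).getLastD 0 ∨ ∃ ρ, k < ρ ∧ (l, ρ) ∈ Out.getD (i' - 1) [])
    (fun _ _ i i' l k _ _ _ _ hq => by simp at hq) ?_ hs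
  intro f col rest b hs hL ih i i' l k h1 hii hif hl hq
  have hs' := hs.step hT hL
  have hQ := hs'.length_scanColPathsAux hT
  rcases mem_getD_append_singleton h1 hq with ⟨hi, hq⟩ | ⟨hi, -⟩
  swap; · omega
  rcases Nat.lt_or_ge i' (f + 1) with hi' | hi'
  · rw [getD_append _ _ _ _ (by omega)]
    exact ih i i' l k h1 hii (by omega) hl hq
  obtain rfl : i' = f + 1 := by omega
  rw [getD_append_right _ _ _ _ (by omega), hQ, Nat.add_sub_cancel, Nat.sub_self, getD_cons_zero]
  obtain ⟨-, hk1, hk, -⟩ := hs'.mem_bounds_scanColPathsAux hT i l k h1 hq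
  exact hs.entry_lt_or_mem_below_new_path hT hL hl hk1 hk

end ScanState

end ScanPaths

section PathsOfTableau

variable {T : Cols} {j : ℕ}

theorem pairwise_fst_scanPath (hT : IsSSYT T) (hj : 1 ≤ j) (i : ℕ) :
    ((scanPath T j i).map Prod.fst).Pairwise (· < ·) :=
  forall_getD_of_forall (by simp) ((ScanState.init hT hj).pairwise_fst_of_mem_scanColPathsAux hT) _

theorem isChain_entries_scanPath (hT : IsSSYT T) (hj : 1 ≤ j) (i : ℕ) :
    ((scanPath T j i).map (boxEntry T)).IsChain (· ≤ ·) :=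
  forall_getD_of_forall (by simp)
    ((ScanState.init hT hj).isChain_entries_of_mem_scanColPathsAux hT) _

theorem head_scanPath (hT : IsSSYT T) (hj : 1 ≤ j) {i : ℕ} (hi : 1 ≤ i)
    (hiT : i ≤ (T.getD (j - 1) []).length) : ∃ p, scanPath T j i = (j, i) :: p :=
  let ⟨p, hp, _⟩ := (ScanState.init hT hj).head_scanColPathsAux hT i hi hiT
  ⟨p, hp⟩

theorem mem_scanPath_bounds (hT : IsSSYT T) (hj : 1 ≤ j) {i l k : ℕ} (hi : 1 ≤ i)
    (h : (l, k) ∈ scanPath T j i) :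
    j ≤ l ∧ l ≤ T.length ∧ 1 ≤ k ∧ k ≤ (T.getD (l - 1) []).length ∧ (l = j → k = i) ∧
      i ≤ (T.getD (j - 1) []).length := by
  have hs := ScanState.init hT hj
  have hiT : i ≤ (T.getD (j - 1) []).length := by
    by_contra hcon
    rw [scanPath, pathsFrom, getD_eq_default _ _ (by rw [hs.length_scanColPathsAux hT]; omega)] at h
    simp at h
  obtain ⟨hjl, hk, hkT, hlj⟩ := hs.mem_bounds_scanColPathsAux hT i l k hi h
  rw [getD_cons_drop hj, show j - 1 + (l - j) = l - 1 by omega] at hkT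
  have hlT : l ≤ T.length := by
    by_contra hcon
    rw [getD_eq_default _ _ (by omega), length_nil] at hkT
    omega
  exact ⟨hjl, hlT, hk, hkT, hlj, hiT⟩

theorem cover_scanPath (hT : IsSSYT T) (hj : 1 ≤ j) {l k : ℕ} (hjl : j < l) (hk : 1 ≤ k)
    (hkT : k ≤ (T.getD (l - 1) []).length) :
    ∃ i, 1 ≤ i ∧ i ≤ (T.getD (j - 1) []).length ∧ (l, k) ∈ scanPath T j i := by
  have hs := ScanState.init hT hj
  refine hs.cover_scanColPathsAux hT l k hjl hk ?_
  rwa [getD_cons_drop hj, show j - 1 + (l - j) = l - 1 by omega]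

theorem findIdx_mem_pathsFrom (hT : IsSSYT T) (hj : 1 ≤ j) {q : ℕ × ℕ} {t : ℕ} (ht : 1 ≤ t)
    (hq : q ∈ scanPath T j t) : (pathsFrom T j).findIdx (fun p => decide (q ∈ p)) = t - 1 := by
  have hs := ScanState.init hT hj
  have hlt : t - 1 < (pathsFrom T j).length := by
    by_contra hcon
    rw [scanPath, getD_eq_default _ _ (by omega)] at hq
    simp at hq
  refine (findIdx_eq hlt).mpr ⟨?_, fun s hs' => ?_⟩
  · rw [← getD_eq_getElem _ [] hlt]
    exact decide_eq_true hq
  · rw [← getD_eq_getElem _ [] (by omega), decide_eq_false_iff_not]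
    intro hmem
    have := hs.disjoint_scanColPathsAux hT (s + 1) t q (by omega) ht
      (by rw [Nat.add_sub_cancel]; exact hmem) hq
    omega

theorem aIdx_le (hT : IsSSYT T) (hj : 1 ≤ j) {i l k : ℕ} (hjl : j < l) (hk : 1 ≤ k)
    (hkT : k ≤ (T.getD (l - 1) []).length) (hi : 1 ≤ i) (h : (l, k) ∈ scanPath T j i) :
    aIdx T l k j ≤ i := by
  have hs := ScanState.init hT hj
  have hkT' : k ≤ (T.getD (l - 1 - 1) []).length := by
    have := hT.length_antitone (show l - 1 - 1 ≤ l - 1 by omega)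
    simp only at this
    omega
  rw [aIdx, if_neg hjl.ne]
  by_cases hlj : l - 1 = j
  · obtain ⟨p, hp⟩ := head_scanPath hT hj hk (by rwa [← hlj])
    have hmem : (l - 1, k) ∈ scanPath T j k := by rw [hp, hlj]; exact mem_cons_self
    rw [findIdx_mem_pathsFrom hT hj hk hmem]
    have := hs.row_le_of_mem_scanColPathsAux hT i l k hi h
    omega
  · obtain ⟨ia, hia, -, hmem⟩ := cover_scanPath hT hj (show j < l - 1 by omega) hk hkT'
    rw [findIdx_mem_pathsFrom hT hj hia hmem]
    have := hs.le_of_mem_scanColPathsAux_left hT ia i l k hia hi (by omega) hmem h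
    omega

theorem lt_bIdx (hT : IsSSYT T) (hj : 1 ≤ j) {i l k : ℕ} (hjl : j < l)
    (hkT : k ≤ (T.getD (l - 1) []).length) (hi : 1 ≤ i) (h : (l, k) ∈ scanPath T j i) :
    i < bIdx T l k j := by
  have hs := ScanState.init hT hj
  rw [bIdx, if_neg hjl.ne]
  by_cases hkl : k = (T.getD (l - 1) []).length
  · rw [if_pos hkl]
    have := (mem_scanPath_bounds hT hj hi h).2.2.2.2.2
    omega
  · rw [if_neg hkl]
    obtain ⟨ib, hib, -, hmem⟩ := cover_scanPath hT hj hjl (by omega) (show k + 1 ≤ _ by omega)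
    rw [findIdx_mem_pathsFrom hT hj hib hmem]
    have := hs.lt_of_mem_scanColPathsAux_of_lt hT i ib l k (k + 1) hi hib h hmem (by omega)
    omega

theorem bIdx_le (hT : IsSSYT T) (hj : 1 ≤ j) {l k : ℕ} (hjl : j ≠ l) :
    bIdx T l k j ≤ (T.getD (j - 1) []).length + 1 := by
  rw [bIdx, if_neg hjl]
  split_ifs
  · exact le_rfl
  · have := findIdx_le_length (p := fun p => decide ((l, k + 1) ∈ p)) (xs := pathsFrom T j)
    rw [pathsFrom, (ScanState.init hT hj).length_scanColPathsAux hT] at this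
    exact Nat.succ_le_succ this

theorem eVal_eq_getLastD {l k i : ℕ} (hjl : j ≠ l) :
    eVal T l k j i =
      (((scanPath T j i).filter (fun q => q.1 < l)).map (boxEntry T)).getLastD 0 := by
  rw [eVal, if_neg hjl, getLastD_eq_getLast?, getLast?_map]
  cases ((scanPath T j i).filter (fun q => q.1 < l)).getLast? <;> rfl

theorem eVal_le (hT : IsSSYT T) (hj : 1 ≤ j) {i l k : ℕ} (hjl : j < l)
    (h : (l, k) ∈ scanPath T j i) : eVal T l k j i ≤ entryAt T l k := by
  rw [eVal_eq_getLastD hjl.ne, getLastD_eq_getLast?, getLast?_map]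
  cases hq : ((scanPath T j i).filter (fun q => q.1 < l)).getLast? with
  | none => exact Nat.zero_le _
  | some q =>
    obtain ⟨hqm, hql⟩ := mem_filter.mp (mem_of_getLast? hq)
    exact le_of_mem_of_lt (pairwise_fst_scanPath hT hj i) (isChain_entries_scanPath hT hj i)
      hqm h (by simpa using hql)

theorem bIdx_le_of_mem_below (hT : IsSSYT T) (hj : 1 ≤ j) {i l k ρ : ℕ} (hjl : j < l)
    (hi : 1 ≤ i) (hρ : (l, ρ) ∈ scanPath T j i) (hkρ : k < ρ) : bIdx T l k j ≤ i := by
  have hs := ScanState.init hT hj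
  obtain ⟨-, -, -, hρT, -⟩ := mem_scanPath_bounds hT hj hi hρ
  rw [bIdx, if_neg hjl.ne, if_neg (by omega)]
  obtain ⟨ib, hib, -, hmem⟩ := cover_scanPath hT hj hjl (by omega) (show k + 1 ≤ _ by omega)
  rw [findIdx_mem_pathsFrom hT hj hib hmem]
  rcases Nat.lt_or_ge (k + 1) ρ with hlt | hge
  · have := hs.lt_of_mem_scanColPathsAux_of_lt hT ib i l (k + 1) ρ hib hi hmem hρ hlt
    omega
  · obtain rfl : ρ = k + 1 := by omega
    have := hs.disjoint_scanColPathsAux hT i ib (l, k + 1) hi hib hρ hmem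
    omega

theorem entryAt_lt_eVal (hT : IsSSYT T) (hj : 1 ≤ j) {i i' l k : ℕ} (hjl : j < l) (hi : 1 ≤ i)
    (h : (l, k) ∈ scanPath T j i) (hii : i < i') (hib : i' < bIdx T l k j) :
    entryAt T l k < eVal T l k j i' := by
  have hif : i' ≤ (T.getD (j - 1) []).length := by
    have := bIdx_le hT hj (k := k) hjl.ne
    omega
  rcases (ScanState.init hT hj).entry_lt_or_mem_below hT i i' l k hi hii hif hjl h with
    hV | ⟨ρ, hkρ, hρ⟩
  · rw [eVal_eq_getLastD hjl.ne]
    exact hV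
  · exact absurd (bIdx_le_of_mem_below hT hj hjl (by omega) hρ hkρ) (by omega)

end PathsOfTableau

section Conditions

variable {T : Cols}

def PathBounded (T Y : Cols) : Prop :=
  ∀ j i l k, 1 ≤ j → j ≤ T.length → 1 ≤ i → (l, k) ∈ scanPath T j i →
    entryAt T l k ≤ entryAt Y j i

theorem sVal_eq_of_getLast? {j i : ℕ} {q : ℕ × ℕ} (hq : (scanPath T j i).getLast? = some q) :
    sVal T j i = boxEntry T q := by
  rw [sVal, hq]
  rfl

theorem sVal_le_iff_pathBounded (hT : IsSSYT T) (Y : Cols) :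
    (∀ j i, 1 ≤ j → j ≤ T.length → 1 ≤ i → i ≤ (T.getD (j - 1) []).length →
        sVal T j i ≤ entryAt Y j i) ↔ PathBounded T Y := by
  constructor
  · intro hS j i l k hj hjT hi h
    obtain ⟨q, hq⟩ : ∃ q, (scanPath T j i).getLast? = some q :=
      ⟨_, getLast?_eq_some_getLast (ne_nil_of_mem h)⟩
    calc entryAt T l k = boxEntry T (l, k) := rfl
      _ ≤ boxEntry T q := le_of_mem_of_getLast? (isChain_entries_scanPath hT hj i) h hq
      _ = sVal T j i := (sVal_eq_of_getLast? hq).symm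
      _ ≤ entryAt Y j i := hS j i hj hjT hi (mem_scanPath_bounds hT hj hi h).2.2.2.2.2
  · intro hC j i hj hjT hi hiT
    obtain ⟨p, hp⟩ := head_scanPath hT hj hi hiT
    obtain ⟨q, hq⟩ : ∃ q, (scanPath T j i).getLast? = some q :=
      ⟨_, getLast?_eq_some_getLast (by simp [hp])⟩
    rw [sVal_eq_of_getLast? hq]
    exact hC j i q.1 q.2 hj hjT hi (mem_of_getLast? hq)

theorem localB_of_pathBounded (hT : IsSSYT T) (hpos : ∀ c ∈ T, ∀ x ∈ c, 1 ≤ x) {Y : Cols}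
    (hC : PathBounded T Y) {l k : ℕ} (hlT : l ≤ T.length) (hk : 1 ≤ k)
    (hkT : k ≤ (T.getD (l - 1) []).length) : entryAt T l k ∈ localB T Y l k := by
  intro j hj hjl
  rcases hjl.lt_or_eq with hjl | rfl
  · obtain ⟨i, hi, -, hmem⟩ := cover_scanPath hT hj hjl hk hkT
    exact ⟨i, aIdx_le hT hj hjl hk hkT hi hmem, lt_bIdx hT hj hjl hkT hi hmem,
      eVal_le hT hj hjl hmem, hC j i l k hj (by omega) hi hmem⟩
  · obtain ⟨p, hp⟩ := head_scanPath hT hj hk hkT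
    refine ⟨k, by simp [aIdx], by simp [bIdx], ?_,
      hC j k j k hj hlT hk (by rw [hp]; exact mem_cons_self)⟩
    -- `E(j, k; j, k) = k`, and a strictly increasing column of positive entries has `k ≤ T(j, k)`
    have := add_one_le_getD_of_isChain (hT.isChain_getD (j - 1))
      (forall_getD_of_forall (by simp) hpos (j - 1)) (t := k - 1) (by omega)
    rw [eVal, if_pos rfl, entryAt]
    omega

theorem pathBounded_of_localB (hT : IsSSYT T) {Y : Cols} (hY : ∀ c ∈ Y, c.Pairwise (· ≤ ·))
    (hYT : shape Y = shape T)
    (hB : ∀ l k, 1 ≤ l → l ≤ T.length → 1 ≤ k → k ≤ (T.getD (l - 1) []).length →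
      entryAt T l k ∈ localB T Y l k) : PathBounded T Y := by
  intro j i l k hj hjT hi h
  obtain ⟨hjl, hlT, hk, hkT, hlj, hiT⟩ := mem_scanPath_bounds hT hj hi h
  obtain ⟨i', ha, hb, hE, hY'⟩ := hB l k (by omega) hlT hk hkT j hj hjl
  rcases hjl.lt_or_eq with hjl | rfl
  · rcases Nat.lt_or_ge i i' with hii | hii
    · exact absurd hE (not_le.mpr (entryAt_lt_eVal hT hj hjl hi h hii (by omega)))
    · have hlen : (Y.getD (j - 1) []).length = (T.getD (j - 1) []).length := by
        rw [← shape_getD, ← shape_getD, hYT]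
      calc entryAt T l k ≤ entryAt Y j i' := hY'
        _ ≤ entryAt Y j i := getD_le_getD_of_pairwise (forall_getD_of_forall (by simp) hY _)
            (by omega) (by omega) 0
  · rw [aIdx, if_pos rfl] at ha
    rw [bIdx, if_pos rfl] at hb
    obtain rfl := hlj rfl
    obtain rfl : i' = k := by omega
    exact hY'

end Conditions

theorem pairwise_of_mem_keyOf (n : ℕ) (w : Equiv.Perm (Fin n)) (zeta : List ℕ) :
    ∀ c ∈ keyOf n w zeta, c.Pairwise (· ≤ ·) := by
  intro c hc
  obtain ⟨k, -, rfl⟩ := mem_map.mp hc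
  exact pairwise_insertionSort _ _

theorem shape_keyOf {n : ℕ} (w : Equiv.Perm (Fin n)) {zeta : List ℕ} (h : ∀ k ∈ zeta, k ≤ n) :
    shape (keyOf n w zeta) = zeta := by
  rw [shape, keyOf, map_map]
  conv_rhs => rw [← map_id zeta]
  refine map_congr_left fun k hk => ?_
  simp only [Function.comp, length_insertionSort, length_filterMap_eq_countP, id]
  rw [countP_eq_length.mpr fun i hi => by simp [(mem_range.mp hi).trans_le (h k hk)]]
  exact length_range

theorem IsSSYT.length_le_of_entriesIn {n : ℕ} {T : Cols} (hT : IsSSYT T) (he : EntriesIn n T) :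
    ∀ k ∈ shape T, k ≤ n := by
  intro k hk
  obtain ⟨c, hc, rfl⟩ := mem_map.mp hk
  rcases Nat.eq_zero_or_pos c.length with h0 | hpos
  · omega
  have hlast := add_one_le_getD_of_isChain (hT.2.1 c hc) (fun x hx => (he c hc x hx).1)
    (t := c.length - 1) (by omega)
  rw [getD_eq_getElem _ _ (by omega)] at hlast
  have := (he c hc _ (getElem_mem (show c.length - 1 < c.length by omega))).2
  omega

/-- S(T;j,i) ≤ Y(w;j,i) for all boxes iff every entry of T lies in
the local condition set for its location. -/
theorem sVal_le_key_iff_localB (n : ℕ) (T : Cols) (w : Equiv.Perm (Fin n))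
    (hT : IsSSYT T) (he : EntriesIn n T) :
    ((∀ j i, 1 ≤ j → j ≤ T.length → 1 ≤ i → i ≤ (T.getD (j-1) []).length →
        sVal T j i ≤ entryAt (keyOf n w (shape T)) j i)
     ↔ (∀ l k, 1 ≤ l → l ≤ T.length → 1 ≤ k → k ≤ (T.getD (l-1) []).length →
        entryAt T l k ∈ localB T (keyOf n w (shape T)) l k)) := by
  rw [sVal_le_iff_pathBounded hT]
  exact ⟨fun hC l k _ hlT hk hkT =>
      localB_of_pathBounded hT (fun c hc x hx => (he c hc x hx).1) hC hlT hk hkT,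
    pathBounded_of_localB hT (pairwise_of_mem_keyOf n w _)
      (shape_keyOf w (hT.length_le_of_entriesIn he))⟩

end Demazure
end

section
/- Let λ = (d,...,d, d−1, ..., 2, 1) be a partial staircase n-partition for some 1 ≤ d ≤ n, and let w ∈ S_n. If w is 312-avoiding, then the key Y_λ(w) has no 312-containing gaps. -/
namespace Demazure

/-- A key K has a 312-containing gap: some column j has a gap (two consecutive
entries differing by more than one) weakly below an entry of column j that does
not appear in column j+1. -/
def Has312Gap (K : Cols) : Prop :=
  ∃ j, j + 1 < K.length ∧
    ∃ x ∈ K.getD j [], x ∉ K.getD (j+1) [] ∧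
      ∃ p, p + 1 < (K.getD j []).length ∧
        x ≤ (K.getD j []).getD p 0 ∧
        (K.getD j []).getD p 0 + 1 < (K.getD j []).getD (p+1) 0

/-! Column `j` of the key holds `w(1), …, w(k)` sorted and column `j+1` holds
`w(1), …, w(k-1)`, so the entry of column `j` missing from column `j+1` is `w(k)`. A gap
`s, s'` below it, with `s' = w(a)` for some `a < k`, means that a value `v` with
`w(k) < v < w(a)` is taken only at a position `c > k`, and then `a < k < c` is a 312 pattern. -/

def firstValues (n : ℕ) (w : Equiv.Perm (Fin n)) (k : ℕ) : List ℕ :=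
  (List.range k).filterMap (fun i =>
    if h : i < n then some (((w ⟨i, h⟩ : Fin n) : ℕ) + 1) else none)

lemma mem_firstValues {n : ℕ} {w : Equiv.Perm (Fin n)} {k x : ℕ} :
    x ∈ firstValues n w k ↔ ∃ i : Fin n, (i : ℕ) < k ∧ (w i : ℕ) + 1 = x := by
  simp only [firstValues, List.mem_filterMap, List.mem_range, Option.dite_none_right_eq_some,
    Option.some.injEq]
  constructor
  · rintro ⟨i, hik, hin, rfl⟩
    exact ⟨⟨i, hin⟩, hik, rfl⟩
  · rintro ⟨i, hik, rfl⟩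
    exact ⟨i, hik, i.isLt, rfl⟩

lemma keyOf_staircaseCols_getD {n d j : ℕ} (w : Equiv.Perm (Fin n)) (hj : j < d) :
    (keyOf n w (staircaseCols n d)).getD j [] =
      (firstValues n w (n - j)).insertionSort (· ≤ ·) := by
  simp [keyOf, staircaseCols, firstValues, hj]

lemma _root_.List.SortedLE.getElem_succ_le_of_mem {α : Type*} [LinearOrder α] {l : List α}
    (hl : l.SortedLE) {p : ℕ} (hp : p + 1 < l.length) {y : α} (hy : y ∈ l)
    (hpy : l[p] < y) : l[p + 1] ≤ y := by
  obtain ⟨q, hq, rfl⟩ := List.getElem_of_mem hy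
  have hpq : p < q := by
    by_contra! hqp
    exact (hl.getElem_le_getElem_of_le hqp).not_gt hpy
  exact hl.getElem_le_getElem_of_le hpq

/-- For `w` avoiding 312, the values `w i` with `i ≤ b` that are at least `w b` form an interval. -/
lemma Is312Avoiding.mem_firstValues_of_le_of_le {n : ℕ} {w : Equiv.Perm (Fin n)}
    (hw : Is312Avoiding w) {k : ℕ} {b : Fin n} (hb : (b : ℕ) + 1 = k) {v y : ℕ}
    (hy : y ∈ firstValues n w k) (hbv : (w b : ℕ) + 1 ≤ v) (hvy : v ≤ y) :
    v ∈ firstValues n w k := by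
  obtain ⟨a, hak, rfl⟩ := mem_firstValues.1 hy
  have hv : v - 1 < n := by have := (w a).isLt; omega
  obtain ⟨c, hwc⟩ : ∃ c, (w c : ℕ) = v - 1 := ⟨w.symm ⟨v - 1, hv⟩, by simp⟩
  refine mem_firstValues.2 ⟨c, ?_, by omega⟩
  by_contra hck
  have hca : (w c : ℕ) ≠ w a := fun h => by
    rw [w.injective (Fin.ext h)] at hck; omega
  have hcb : (w c : ℕ) ≠ w b := fun h => by
    rw [w.injective (Fin.ext h)] at hck; omega
  have hab : (a : ℕ) ≠ b := Fin.val_ne_of_ne (by rintro rfl; omega)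
  exact hw ⟨a, b, c, Fin.lt_def.2 (by omega), Fin.lt_def.2 (by omega),
    Fin.lt_def.2 (by omega), Fin.lt_def.2 (by omega)⟩

theorem no312Gap_of_312Avoiding_general (n d : ℕ)
    (w : Equiv.Perm (Fin n)) (hw : Is312Avoiding w) :
    ¬ Has312Gap (keyOf n w (staircaseCols n d)) := by
  rintro ⟨j, hj, x, hx, hx', p, hp, hxp, hgap⟩
  have hjd : j + 1 < d := by simpa [keyOf, staircaseCols] using hj
  rw [keyOf_staircaseCols_getD w (by omega)] at hx hp hxp hgap
  rw [keyOf_staircaseCols_getD w hjd, Nat.sub_add_eq] at hx'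
  set col := (firstValues n w (n - j)).insertionSort (· ≤ ·)
  obtain ⟨b, hbk, rfl⟩ := mem_firstValues.1 ((List.mem_insertionSort _).1 hx)
  have hb : (b : ℕ) + 1 = n - j := by
    by_contra
    exact hx' ((List.mem_insertionSort _).2 (mem_firstValues.2 ⟨b, by omega, rfl⟩))
  rw [List.getD_eq_getElem _ _ (by omega), List.getD_eq_getElem _ _ hp] at hgap
  rw [List.getD_eq_getElem _ _ (by omega)] at hxp
  have hsucc : col[p] + 1 ∈ col := (List.mem_insertionSort _).2 <|
    hw.mem_firstValues_of_le_of_le hb ((List.mem_insertionSort _).1 (List.getElem_mem hp))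
      (by omega) (by omega)
  have hsorted : col.SortedLE := List.sortedLE_insertionSort
  have := hsorted.getElem_succ_le_of_mem hp hsucc (by omega)
  omega

/-- for the partial staircase λ = (d,...,d,d-1,...,2,1) and a
312-avoiding w, the key Y_λ(w) has no 312-containing gaps. -/
theorem no312Gap_of_312Avoiding (n d : ℕ) (hd1 : 1 ≤ d) (hdn : d ≤ n)
    (w : Equiv.Perm (Fin n)) (hw : Is312Avoiding w) :
    ¬ Has312Gap (keyOf n w (staircaseCols n d)) :=
  no312Gap_of_312Avoiding_general n d w hw

end Demazure
end
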